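/- The map Σ ↦ Fᵀ R̃(Σ)⁻¹ F is operator convex on positive semidefinite matrices: for all α ∈ [0,1] and all positive semidefinite Σ₁, Σ₂, one has Fᵀ R̃(αΣ₁ + (1−α)Σ₂)⁻¹ F ⪯ α Fᵀ R̃(Σ₁)⁻¹ F + (1−α) Fᵀ R̃(Σ₂)⁻¹ F. -/

import Mathlib

open Matrix BigOperators

noncomputable section

/-- `R̃(Σ) = C (A Σ Aᵀ + Q) Cᵀ + R`. -/
def Rt {ny nz : ℕ} (A Q : Matrix (Fin ny) (Fin ny) ℝ)
    (C : Matrix (Fin nz) (Fin ny) ℝ) (R : Matrix (Fin nz) (Fin nz) ℝ)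
    (S : Matrix (Fin ny) (Fin ny) ℝ) : Matrix (Fin nz) (Fin nz) ℝ :=
  C * (A * S * Aᵀ + Q) * Cᵀ + R

/-- Optimal unknown-input filter gain `M(Σ)`. -/
def Mg {ny nz nd : ℕ} (A Q : Matrix (Fin ny) (Fin ny) ℝ) (G : Matrix (Fin ny) (Fin nd) ℝ)
    (C : Matrix (Fin nz) (Fin ny) ℝ) (R : Matrix (Fin nz) (Fin nz) ℝ)
    (S : Matrix (Fin ny) (Fin ny) ℝ) : Matrix (Fin nd) (Fin nz) ℝ :=
  ((C * G)ᵀ * (Rt A Q C R S)⁻¹ * (C * G))⁻¹ * (C * G)ᵀ * (Rt A Q C R S)⁻¹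

/-- Optimal state filter gain `K(Σ)`. -/
def Kg {ny nz : ℕ} (A Q : Matrix (Fin ny) (Fin ny) ℝ)
    (C : Matrix (Fin nz) (Fin ny) ℝ) (R : Matrix (Fin nz) (Fin nz) ℝ)
    (S : Matrix (Fin ny) (Fin ny) ℝ) : Matrix (Fin ny) (Fin nz) ℝ :=
  (A * S * Aᵀ + Q) * Cᵀ * (Rt A Q C R S)⁻¹

/-- Closed loop matrix `Ã(Σ)`. -/
def Atil {ny nz nd : ℕ} (A Q : Matrix (Fin ny) (Fin ny) ℝ) (G : Matrix (Fin ny) (Fin nd) ℝ)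
    (C : Matrix (Fin nz) (Fin ny) ℝ) (R : Matrix (Fin nz) (Fin nz) ℝ)
    (S : Matrix (Fin ny) (Fin ny) ℝ) : Matrix (Fin ny) (Fin ny) ℝ :=
  (1 - Kg A Q C R S * C) * (1 - G * Mg A Q G C R S * C) * A

/-- `F̃(Σ)`. -/
def Ftil {ny nz nd : ℕ} (A Q : Matrix (Fin ny) (Fin ny) ℝ) (G : Matrix (Fin ny) (Fin nd) ℝ)
    (C : Matrix (Fin nz) (Fin ny) ℝ) (R : Matrix (Fin nz) (Fin nz) ℝ)
    (S : Matrix (Fin ny) (Fin ny) ℝ) : Matrix (Fin ny) (Fin ny) ℝ :=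
  -((1 - Kg A Q C R S * C) * (1 - G * Mg A Q G C R S * C))

/-- `W̃(Σ)`. -/
def Wtil {ny nz nd : ℕ} (A Q : Matrix (Fin ny) (Fin ny) ℝ) (G : Matrix (Fin ny) (Fin nd) ℝ)
    (C : Matrix (Fin nz) (Fin ny) ℝ) (R : Matrix (Fin nz) (Fin nz) ℝ)
    (S : Matrix (Fin ny) (Fin ny) ℝ) : Matrix (Fin ny) (Fin nz) ℝ :=
  G * Mg A Q G C R S - Kg A Q C R S * C * G * Mg A Q G C R S + Kg A Q C R S

/-- The state error covariance update map `ρ(Σ)`. -/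
def rho {ny nz nd : ℕ} (A Q : Matrix (Fin ny) (Fin ny) ℝ) (G : Matrix (Fin ny) (Fin nd) ℝ)
    (C : Matrix (Fin nz) (Fin ny) ℝ) (R : Matrix (Fin nz) (Fin nz) ℝ)
    (S : Matrix (Fin ny) (Fin ny) ℝ) : Matrix (Fin ny) (Fin ny) ℝ :=
  Atil A Q G C R S * S * (Atil A Q G C R S)ᵀ
    + Ftil A Q G C R S * Q * (Ftil A Q G C R S)ᵀ
    + Wtil A Q G C R S * R * (Wtil A Q G C R S)ᵀ

/-- The unknown-input error covariance update map `ρᵈ(Σ)`. -/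
def rhod {ny nz nd : ℕ} (A Q : Matrix (Fin ny) (Fin ny) ℝ) (G : Matrix (Fin ny) (Fin nd) ℝ)
    (C : Matrix (Fin nz) (Fin ny) ℝ) (R : Matrix (Fin nz) (Fin nz) ℝ)
    (S : Matrix (Fin ny) (Fin ny) ℝ) : Matrix (Fin nd) (Fin nd) ℝ :=
  ((C * G)ᵀ * (Rt A Q C R S)⁻¹ * (C * G))⁻¹

/-!
Since `R̃` is affine in `Σ`, it suffices that `X ↦ Bᴴ X⁻¹ B` is operator convex on positive
definite matrices. By the Schur complement criterion, `X ↦ [[X, B], [Bᴴ, Bᴴ X⁻¹ B]]` takes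
positive definite matrices to positive semidefinite ones, and a convex combination of two such
block matrices is again a block matrix with the same off-diagonal blocks; applying the Schur
complement criterion to it gives the inequality.
-/

open scoped ComplexOrder

namespace Matrix

variable {m n 𝕜 : Type*} [RCLike 𝕜]

lemma PosDef.convexComb {X Y : Matrix m m 𝕜} (hX : X.PosDef) (hY : Y.PosDef) {a b : ℝ}
    (ha : 0 ≤ a) (hb : 0 ≤ b) (hab : a + b = 1) : (a • X + b • Y).PosDef := by
  rcases ha.eq_or_lt with rfl | ha
  · simpa [show b = 1 by linarith] using hY
  · exact (hX.smul ha).add_posSemidef (hY.posSemidef.smul hb)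

variable [Fintype m] [Fintype n] [DecidableEq m]

lemma PosDef.posSemidef_fromBlocks_inv {X : Matrix m m 𝕜} (hX : X.PosDef) (B : Matrix m n 𝕜) :
    (fromBlocks X B Bᴴ (Bᴴ * X⁻¹ * B)).PosSemidef := by
  have := hX.isUnit.invertible
  rw [hX.fromBlocks₁₁ B, sub_self]
  exact .zero

theorem posSemidef_convexComb_conjTranspose_mul_inv_mul_sub {X Y : Matrix m m 𝕜}
    (hX : X.PosDef) (hY : Y.PosDef) (B : Matrix m n 𝕜) {a b : ℝ}
    (ha : 0 ≤ a) (hb : 0 ≤ b) (hab : a + b = 1) :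
    (a • (Bᴴ * X⁻¹ * B) + b • (Bᴴ * Y⁻¹ * B) - Bᴴ * (a • X + b • Y)⁻¹ * B).PosSemidef := by
  have hZ := hX.convexComb hY ha hb hab
  have := hZ.isUnit.invertible
  have hblocks := ((hX.posSemidef_fromBlocks_inv B).smul ha).add
    ((hY.posSemidef_fromBlocks_inv B).smul hb)
  rwa [fromBlocks_smul, fromBlocks_smul, fromBlocks_add, ← add_smul, ← add_smul, hab, one_smul,
    one_smul, hZ.fromBlocks₁₁] at hblocks

end Matrix

section Rt

variable {ny nz : ℕ} (A Q : Matrix (Fin ny) (Fin ny) ℝ) (C : Matrix (Fin nz) (Fin ny) ℝ)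
  (R : Matrix (Fin nz) (Fin nz) ℝ)

lemma Rt_posDef {S : Matrix (Fin ny) (Fin ny) ℝ} (hQ : Q.PosSemidef) (hR : R.PosDef)
    (hS : S.PosSemidef) : (Rt A Q C R S).PosDef := by
  have hASA : (A * S * Aᵀ).PosSemidef := by
    simpa only [conjTranspose_eq_transpose_of_trivial] using hS.mul_mul_conjTranspose_same A
  have hC : (C * (A * S * Aᵀ + Q) * Cᵀ).PosSemidef := by
    simpa only [conjTranspose_eq_transpose_of_trivial] using
      (hASA.add hQ).mul_mul_conjTranspose_same C
  exact PosDef.posSemidef_add hC hR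

lemma Rt_affineComb (S₁ S₂ : Matrix (Fin ny) (Fin ny) ℝ) {a b : ℝ} (hab : a + b = 1) :
    Rt A Q C R (a • S₁ + b • S₂) = a • Rt A Q C R S₁ + b • Rt A Q C R S₂ := by
  obtain rfl : b = 1 - a := by linarith
  simp only [Rt, Matrix.mul_add, Matrix.add_mul, Matrix.mul_smul, Matrix.smul_mul]
  module

end Rt

/-- the map `Σ ↦ Fᵀ R̃(Σ)⁻¹ F` (with `F = C·G`) is operator convex
on PSD matrices: for `α ∈ [0,1]` and PSD `Σ₁, Σ₂`,
`Fᵀ R̃(αΣ₁ + (1−α)Σ₂)⁻¹ F ⪯ α Fᵀ R̃(Σ₁)⁻¹ F + (1−α) Fᵀ R̃(Σ₂)⁻¹ F`. -/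
theorem info_matrix_operator_convex {ny nz nd : ℕ}
    (A Q : Matrix (Fin ny) (Fin ny) ℝ) (G : Matrix (Fin ny) (Fin nd) ℝ)
    (C : Matrix (Fin nz) (Fin ny) ℝ) (R : Matrix (Fin nz) (Fin nz) ℝ)
    (hQ : Q.PosDef) (hR : R.PosDef)
    (α : ℝ) (hα0 : 0 ≤ α) (hα1 : α ≤ 1)
    (S1 S2 : Matrix (Fin ny) (Fin ny) ℝ)
    (h1 : S1.PosSemidef) (h2 : S2.PosSemidef) :
    (α • ((C * G)ᵀ * (Rt A Q C R S1)⁻¹ * (C * G))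
      + (1 - α) • ((C * G)ᵀ * (Rt A Q C R S2)⁻¹ * (C * G))
      - (C * G)ᵀ * (Rt A Q C R (α • S1 + (1 - α) • S2))⁻¹ * (C * G)).PosSemidef := by
  have hα : α + (1 - α) = 1 := add_sub_cancel α 1
  rw [Rt_affineComb A Q C R S1 S2 hα]
  simpa only [conjTranspose_eq_transpose_of_trivial] using
    posSemidef_convexComb_conjTranspose_mul_inv_mul_sub (Rt_posDef A Q C R hQ.posSemidef hR h1)
      (Rt_posDef A Q C R hQ.posSemidef hR h2) (C * G) hα0 (sub_nonneg.2 hα1) hα
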